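/- arXiv:math/0302197 — 3 statements merged into one kernel-verified Lean document; each statement's English description precedes it below -/
import Mathlib

section
/- Let h > 0, ω ∈ ℝ, N ≥ 1, and let q : ℝ → (ℤ → ℂ) be a map, differentiable in t for each n, satisfying the discrete NLS equation i q̇_n = (1/h²)(q_{n+1} − 2q_n + q_{n−1}) + |q_n|²(q_{n+1} + q_{n−1}) − 2ω² q_n for all n and t. Then for every λ ∈ ℂ, setting z = exp(iλh), the Lax representation holds: for all n and t, d/dt L_n(t) = B_{n+1}(t) L_n(t) − L_n(t) B_n(t), where L_n and B_n are the 2×2 matrices of the discrete Lax pair. -/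
/-!
Along a solution only the off-diagonal entries `ihq_n`, `ih conj(q_n)` of `L_n` move, with
velocities `ihF_n`, `ih conj(F_n)`, where `q̇_n = F_n(q)` is the DNLS equation solved for `q̇_n`.
Multiplying out, `B_{n+1}L_n - L_nB_n` has zero diagonal and exactly these off-diagonal entries,
using `|q_n|² = q_n conj(q_n)`; this is a purely algebraic identity in `q`.
-/

open Complex Matrix

/-- The spatial Lax matrix `L_n` of the discrete NLS equation. -/
noncomputable def LaxL (h : ℝ) (z : ℂ) (q : ℤ → ℂ) (n : ℤ) : Matrix (Fin 2) (Fin 2) ℂ :=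
  !![z, Complex.I * h * q n;
     Complex.I * h * (starRingEnd ℂ (q n)), 1 / z]

/-- The temporal Lax matrix `B_n` of the discrete NLS equation. -/
noncomputable def LaxB (h ω : ℝ) (lam z : ℂ) (q : ℤ → ℂ) (n : ℤ) : Matrix (Fin 2) (Fin 2) ℂ :=
  (Complex.I / (h : ℂ) ^ 2) •
    !![1 - z ^ 2 + 2 * Complex.I * lam * h - h ^ 2 * q n * (starRingEnd ℂ (q (n - 1)))
         + ω ^ 2 * h ^ 2,
       -Complex.I * z * h * q n + (1 / z) * Complex.I * h * q (n - 1);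
       -Complex.I * z * h * (starRingEnd ℂ (q (n - 1))) + (1 / z) * Complex.I * h *
         (starRingEnd ℂ (q n)),
       1 / z ^ 2 - 1 + 2 * Complex.I * lam * h + h ^ 2 * (starRingEnd ℂ (q n)) * q (n - 1)
         - ω ^ 2 * h ^ 2]

noncomputable def dnlsField (h ω : ℝ) (q : ℤ → ℂ) (n : ℤ) : ℂ :=
  -Complex.I * ((1 / (h : ℂ) ^ 2) * (q (n + 1) - 2 * q n + q (n - 1))
    + (‖q n‖ : ℂ) ^ 2 * (q (n + 1) + q (n - 1)) - 2 * (ω : ℂ) ^ 2 * q n)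

theorem eq_dnlsField_of_dnls {h ω : ℝ} {q : ℤ → ℂ} {n : ℤ} {d : ℂ}
    (hd : Complex.I * d = (1 / (h : ℂ) ^ 2) * (q (n + 1) - 2 * q n + q (n - 1))
      + (‖q n‖ : ℂ) ^ 2 * (q (n + 1) + q (n - 1)) - 2 * (ω : ℂ) ^ 2 * q n) :
    d = dnlsField h ω q n := by
  rw [dnlsField, ← hd, ← mul_assoc, neg_mul, Complex.I_mul_I, neg_neg, one_mul]

/-- The terms `2iλh` of `B_n` are scalar and cancel. -/
theorem laxB_mul_laxL_sub_laxL_mul_laxB {h : ℝ} (hh : h ≠ 0) (ω : ℝ) (lam : ℂ) {z : ℂ}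
    (hz : z ≠ 0) (q : ℤ → ℂ) (n : ℤ) :
    LaxB h ω lam z q (n + 1) * LaxL h z q n - LaxL h z q n * LaxB h ω lam z q n =
      !![0, Complex.I * h * dnlsField h ω q n;
         Complex.I * h * starRingEnd ℂ (dnlsField h ω q n), 0] := by
  have hh' : (h : ℂ) ≠ 0 := by exact_mod_cast hh
  have hnorm : ((‖q n‖ : ℝ) : ℂ) ^ 2 = q n * starRingEnd ℂ (q n) := (Complex.mul_conj' _).symm
  ext i j
  fin_cases i <;> fin_cases j <;>
    simp only [LaxL, LaxB, dnlsField, hnorm, Matrix.sub_apply, Matrix.mul_apply, Fin.sum_univ_two,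
      Matrix.smul_apply, smul_eq_mul, Matrix.of_apply, Matrix.cons_val', Matrix.cons_val_zero,
      Matrix.cons_val_one, Matrix.empty_val', Matrix.cons_val_fin_one, add_sub_cancel_right,
      Fin.isValue, Fin.zero_eta, Fin.mk_one, map_mul, map_neg, map_sub, map_add, map_div₀, map_pow,
      map_ofNat, map_one, conj_I, conj_ofReal, conj_conj] <;>
    field_simp <;> (try simp only [Complex.I_sq]) <;> ring

theorem hasDerivAt_laxL_apply (h : ℝ) (z : ℂ) {q : ℝ → ℤ → ℂ} {n : ℤ} {t : ℝ} {d : ℂ}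
    (hq : HasDerivAt (fun s => q s n) d t) (i j : Fin 2) :
    HasDerivAt (fun s => LaxL h z (q s) n i j)
      (!![0, Complex.I * h * d; Complex.I * h * starRingEnd ℂ d, 0] i j) t := by
  fin_cases i <;> fin_cases j
  · exact hasDerivAt_const t z
  · exact hq.const_mul (Complex.I * h)
  · exact hq.star.const_mul (Complex.I * h)
  · exact hasDerivAt_const t (1 / z)

theorem lax_representation_of_DNLS_general
    (h ω : ℝ) (hh : 0 < h)
    (q dq : ℝ → ℤ → ℂ)
    (hdiff : ∀ (n : ℤ) (t : ℝ), HasDerivAt (fun s => q s n) (dq t n) t)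
    (hDNLS : ∀ (n : ℤ) (t : ℝ),
      Complex.I * dq t n =
        (1 / (h : ℂ) ^ 2) * (q t (n + 1) - 2 * q t n + q t (n - 1))
          + (‖q t n‖ : ℂ) ^ 2 * (q t (n + 1) + q t (n - 1))
          - 2 * (ω : ℂ) ^ 2 * q t n)
    (lam : ℂ) (z : ℂ) (hz : z = Complex.exp (Complex.I * lam * h)) :
    ∀ (n : ℤ) (t : ℝ) (i j : Fin 2),
      HasDerivAt (fun s => LaxL h z (q s) n i j)
        ((LaxB h ω lam z (q t) (n + 1) * LaxL h z (q t) n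
          - LaxL h z (q t) n * LaxB h ω lam z (q t) n) i j) t := by
  intro n t i j
  have hz0 : z ≠ 0 := hz ▸ Complex.exp_ne_zero _
  rw [laxB_mul_laxL_sub_laxL_mul_laxB hh.ne' ω lam hz0, ← eq_dnlsField_of_dnls (hDNLS n t)]
  exact hasDerivAt_laxL_apply h z (hdiff n t) i j

/-- If `q` solves the discrete NLS equation, then for every `λ ∈ ℂ`,
with `z = exp(iλh)`, the Lax representation `d/dt L_n = B_{n+1} L_n - L_n B_n` holds
(entrywise in `t`). -/
theorem lax_representation_of_DNLS
    (h ω : ℝ) (hh : 0 < h) (N : ℕ) (hN : 1 ≤ N)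
    (q dq : ℝ → ℤ → ℂ)
    (hdiff : ∀ (n : ℤ) (t : ℝ), HasDerivAt (fun s => q s n) (dq t n) t)
    (hDNLS : ∀ (n : ℤ) (t : ℝ),
      Complex.I * dq t n =
        (1 / (h : ℂ) ^ 2) * (q t (n + 1) - 2 * q t n + q t (n - 1))
          + (‖q t n‖ : ℂ) ^ 2 * (q t (n + 1) + q t (n - 1))
          - 2 * (ω : ℂ) ^ 2 * q t n)
    (lam : ℂ) (z : ℂ) (hz : z = Complex.exp (Complex.I * lam * h)) :
    ∀ (n : ℤ) (t : ℝ) (i j : Fin 2),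
      HasDerivAt (fun s => LaxL h z (q s) n i j)
        ((LaxB h ω lam z (q t) (n + 1) * LaxL h z (q t) n
          - LaxL h z (q t) n * LaxB h ω lam z (q t) n) i j) t :=
  lax_representation_of_DNLS_general h ω hh q dq hdiff hDNLS lam z hz
end

section
/- Let N ≥ 1, let L_n (n ∈ ℤ) be 2×2 complex matrices periodic with period N, and let ψ⁺, ψ⁻ : ℤ → ℂ² solve ψ_{n+1} = L_n ψ_n with ψ±_{n+N} = D ζ^{±1} ψ±_n for nonzero D, ζ ∈ ℂ. Let B_n = (ψ⁺_n, ψ⁻_n), assume B_0 and B_{n+1} are invertible, and set M_n = B_n B_0^{−1}, M_N = B_0 diag(Dζ, Dζ^{−1}) B_0^{−1}, and W_{n+1} = det B_{n+1}. Then trace( M_{n+1}^{−1} · [[0,1],[0,0]] · M_n · M_N ) = (D / W_{n+1}) · ( ζ · ψ^{(−,2)}_{n+1} ψ^{(+,2)}_n − ζ^{−1} · ψ^{(+,2)}_{n+1} ψ^{(−,2)}_n ), where ψ±_n = (ψ^{(±,1)}_n, ψ^{(±,2)}_n). -/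
open Matrix

/-!
Conjugating every factor by the same invertible `B₀` does not change the trace, so
`M_{n+1}⁻¹ E₁₂ M_n M_N` may be replaced by `B_{n+1}⁻¹ E₁₂ B_n diag(Dζ, Dζ⁻¹)`. The trace of the
latter is read off from the adjugate formula for `B_{n+1}⁻¹`: only the second rows of `B_{n+1}`
and `B_n` survive the multiplication by `E₁₂`.
-/

theorem Matrix.trace_inv_mul_conj_of_isUnit {ι R : Type*} [Fintype ι] [DecidableEq ι] [CommRing R]
    (P Q S E Δ : Matrix ι ι R) (hP : IsUnit P) :
    trace ((Q * P⁻¹)⁻¹ * E * (S * P⁻¹) * (P * Δ * P⁻¹)) = trace (Q⁻¹ * E * S * Δ) := by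
  have hdet : IsUnit P.det := (isUnit_iff_isUnit_det P).mp hP
  calc trace ((Q * P⁻¹)⁻¹ * E * (S * P⁻¹) * (P * Δ * P⁻¹))
      = trace (P * (Q⁻¹ * E * S * (P⁻¹ * P) * Δ) * P⁻¹) := by
        rw [mul_inv_rev, nonsing_inv_nonsing_inv P hdet]
        simp only [Matrix.mul_assoc]
    _ = trace (Q⁻¹ * E * S * Δ) := by
        rw [trace_mul_cycle, ← Matrix.mul_assoc, nonsing_inv_mul P hdet, Matrix.one_mul,
          Matrix.mul_one]

theorem Matrix.trace_inv_mul_single_mul_diagonal_fin_two {K : Type*} [Field K]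
    (Q S : Matrix (Fin 2) (Fin 2) K) (x y : K) :
    trace (Q⁻¹ * !![(0 : K), 1; 0, 0] * S * diagonal ![x, y]) =
      (x * Q 1 1 * S 1 0 - y * Q 1 0 * S 1 1) / Q.det := by
  rw [inv_def, Ring.inverse_eq_inv', adjugate_fin_two, diagonal_fin_two, eta_fin_two S]
  simp only [smul_mul, trace_smul, mul_fin_two, trace_fin_two_of, smul_eq_mul, zero_mul,
    mul_zero, add_zero, zero_add, of_apply, cons_val', cons_val_zero, cons_val_one, empty_val',
    cons_val_fin_one]
  ring

theorem trace_identity_bloch_general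
    (ψp ψm : ℤ → Fin 2 → ℂ)
    (D ζ : ℂ)
    (B : ℤ → Matrix (Fin 2) (Fin 2) ℂ)
    (hB : ∀ n : ℤ, B n = !![ψp n 0, ψm n 0; ψp n 1, ψm n 1])
    (n : ℤ)
    (hB0 : IsUnit (B 0)) :
    Matrix.trace
      ((B (n + 1) * (B 0)⁻¹)⁻¹ * !![(0 : ℂ), 1; 0, 0] * (B n * (B 0)⁻¹) *
        (B 0 * Matrix.diagonal ![D * ζ, D * ζ⁻¹] * (B 0)⁻¹)) =
    (D / (B (n + 1)).det) *
      (ζ * ψm (n + 1) 1 * ψp n 1 - ζ⁻¹ * ψp (n + 1) 1 * ψm n 1) := by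
  rw [trace_inv_mul_conj_of_isUnit _ _ _ _ _ hB0, trace_inv_mul_single_mul_diagonal_fin_two,
    hB n, hB (n + 1)]
  simp only [of_apply, cons_val', cons_val_zero, cons_val_one, empty_val', cons_val_fin_one]
  ring

/-- Trace identity in terms of Bloch functions: with
`M_n = B_n B_0⁻¹`, `M_N = B_0 diag(Dζ, Dζ⁻¹) B_0⁻¹`, and `W_{n+1} = det B_{n+1}`,
`trace(M_{n+1}⁻¹ E₁₂ M_n M_N)
  = (D/W_{n+1})(ζ ψ^{(-,2)}_{n+1} ψ^{(+,2)}_n - ζ⁻¹ ψ^{(+,2)}_{n+1} ψ^{(-,2)}_n)`. -/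
theorem trace_identity_bloch
    (N : ℕ) (hN : 1 ≤ N)
    (L : ℤ → Matrix (Fin 2) (Fin 2) ℂ)
    (hLper : ∀ n : ℤ, L (n + N) = L n)
    (ψp ψm : ℤ → Fin 2 → ℂ)
    (hψp : ∀ n : ℤ, ψp (n + 1) = (L n).mulVec (ψp n))
    (hψm : ∀ n : ℤ, ψm (n + 1) = (L n).mulVec (ψm n))
    (D ζ : ℂ) (hD : D ≠ 0) (hζ : ζ ≠ 0)
    (hblochp : ∀ n : ℤ, ψp (n + N) = (D * ζ) • ψp n)
    (hblochm : ∀ n : ℤ, ψm (n + N) = (D * ζ⁻¹) • ψm n)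
    (B : ℤ → Matrix (Fin 2) (Fin 2) ℂ)
    (hB : ∀ n : ℤ, B n = !![ψp n 0, ψm n 0; ψp n 1, ψm n 1])
    (n : ℤ)
    (hB0 : IsUnit (B 0)) (hBn1 : IsUnit (B (n + 1))) :
    Matrix.trace
      ((B (n + 1) * (B 0)⁻¹)⁻¹ * !![(0 : ℂ), 1; 0, 0] * (B n * (B 0)⁻¹) *
        (B 0 * Matrix.diagonal ![D * ζ, D * ζ⁻¹] * (B 0)⁻¹)) =
    (D / (B (n + 1)).det) *
      (ζ * ψm (n + 1) 1 * ψp n 1 - ζ⁻¹ * ψp (n + 1) 1 * ψm n 1) :=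
  trace_identity_bloch_general ψp ψm D ζ B hB n hB0
end

section
/- Let N ≥ 3, h = 1/N, β = π/N, a > N·tan(π/N), ρ = 1 + h²a² (so that ρ cos²β > 1), ω ∈ ℝ, γ ∈ ℝ, p ∈ ℝ, and let φ ∈ (0, π/2) be defined by sin φ = √ρ·sin β/(h a). Set μ = 2 h^{−2} √ρ sin β √(ρ cos²β − 1) > 0, q_c(t) = a·exp(−i[2(a²−ω²)t − γ]), Γ(t) = 1 − cos 2φ − i sin 2φ · tanh(2μt + 2p), and Λ_n(t) = 1 + (cos φ / cos β)·sech(2μt + 2p)·cos(2nβ), and define the heteroclinic orbit Q_n(t) = q_c(t)·( Γ(t)/Λ_n(t) − 1 ). Then for each n, Q_n(t) − e^{i(π+2φ)} q_c(t) → 0 as t → +∞ and Q_n(t) − e^{i(π−2φ)} q_c(t) → 0 as t → −∞; that is, Q_n is homoclinic to the uniform solution q_c with phase shifts θ_± = π ± 2φ. -/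
/-!
As `t → ±∞` the argument `2μt + 2p` tends to `±∞` (`μ > 0` comes from `ρ cos² β > 1`),
so `tanh → ±1` and `sech → 0`. Hence `Λ_n → 1` and
`Γ/Λ_n - 1 → -cos 2φ ∓ i sin 2φ = e^{i(π ± 2φ)}`. Since `|q_c| ≡ |a|` is bounded,
`Q_n - e^{i(π ± 2φ)} q_c = q_c (Γ/Λ_n - 1 - e^{i(π ± 2φ)}) → 0`.
-/

open Complex Real Filter Topology

lemma Real.tanh_eq_two_mul_sigmoid_sub_one (x : ℝ) : tanh x = 2 * sigmoid (2 * x) - 1 := by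
  rw [Real.tanh_eq, sigmoid_def, show -(2 * x) = -x + -x by ring, Real.exp_add, Real.exp_neg]
  field_simp
  ring

lemma Real.tendsto_tanh_atTop : Tendsto tanh atTop (𝓝 1) := by
  rw [funext Real.tanh_eq_two_mul_sigmoid_sub_one]
  have hsig := tendsto_sigmoid_atTop.comp (tendsto_id.const_mul_atTop two_pos)
  convert (hsig.const_mul 2).sub_const 1 <;> norm_num

lemma Real.tendsto_tanh_atBot : Tendsto tanh atBot (𝓝 (-1)) := by
  rw [funext Real.tanh_eq_two_mul_sigmoid_sub_one]
  have hsig := tendsto_sigmoid_atBot.comp (tendsto_id.const_mul_atBot two_pos)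
  convert (hsig.const_mul 2).sub_const 1 <;> norm_num

lemma Real.tendsto_cosh_atTop : Tendsto cosh atTop atTop :=
  tendsto_atTop_mono (fun x => by rw [Real.cosh_eq]; linarith [Real.exp_pos (-x)])
    (Real.tendsto_exp_atTop.atTop_div_const two_pos)

lemma Real.tendsto_cosh_atBot : Tendsto cosh atBot atTop :=
  (Real.tendsto_cosh_atTop.comp tendsto_neg_atBot_atTop).congr fun x => Real.cosh_neg x

lemma Complex.exp_I_mul_pi_add (θ : ℂ) : exp (I * (π + θ)) = -cos θ - I * sin θ := by
  rw [mul_add, exp_add, mul_comm I π, exp_pi_mul_I, mul_comm I θ, exp_mul_I]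
  ring

lemma norm_uniform_solution (a ω γ t : ℝ) :
    ‖(a : ℂ) * Complex.exp (-I * (2 * ((a : ℂ) ^ 2 - (ω : ℂ) ^ 2) * t - γ))‖ = |a| := by
  rw [norm_mul, norm_exp]
  simp [← ofReal_pow]

lemma Real.sin_pi_div_pos {N : ℝ} (hN : 1 < N) : 0 < Real.sin (π / N) :=
  Real.sin_pos_of_pos_of_lt_pi (by positivity) (div_lt_self Real.pi_pos hN)

lemma darboux_rate_pos {h ρ β : ℝ} (hh : h ≠ 0) (hβ : 0 < Real.sin β)
    (hcond : 1 < ρ * Real.cos β ^ 2) :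
    0 < 2 / h ^ 2 * √ρ * Real.sin β * √(ρ * Real.cos β ^ 2 - 1) := by
  have hρ : 0 < ρ := by nlinarith [sq_nonneg (Real.cos β), Real.cos_sq_le_one β]
  have := Real.sqrt_pos.2 hρ
  have := Real.sqrt_pos.2 (sub_pos.2 hcond)
  positivity

lemma Filter.Tendsto.mul_sub_mul_of_norm_le {α R : Type*} [SeminormedCommRing R] {l : Filter α}
    {u g : α → R} {c : R} {C : ℝ} (hg : Tendsto g l (𝓝 c)) (hu : ∀ t, ‖u t‖ ≤ C) :
    Tendsto (fun t => u t * g t - c * u t) l (𝓝 0) := by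
  have := (tendsto_sub_nhds_zero_iff.2 hg).zero_mul_isBoundedUnder_le
    (isBoundedUnder_of ⟨C, fun t => hu t⟩)
  exact this.congr fun t => by ring

lemma tendsto_sub_mul_tanh_div_one_add_mul_sech {α : Type*} {l : Filter α} {x : α → ℝ}
    {s : ℝ} (c d : ℂ) (A B : ℝ) (htanh : Tendsto (fun t => Real.tanh (x t)) l (𝓝 s))
    (hcosh : Tendsto (fun t => Real.cosh (x t)) l atTop) :
    Tendsto (fun t => (c - d * (Real.tanh (x t) : ℂ)) /
      ((1 + A * (1 / Real.cosh (x t)) * B : ℝ) : ℂ)) l (𝓝 (c - d * s)) := by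
  have hden : Tendsto (fun t => 1 + A * (1 / Real.cosh (x t)) * B) l (𝓝 1) := by
    simpa using ((hcosh.inv_tendsto_atTop.const_mul A).mul_const B).const_add 1
  have hnum := tendsto_const_nhds (x := c) |>.sub <|
    tendsto_const_nhds (x := d) |>.mul (continuous_ofReal.tendsto s |>.comp htanh)
  have hquot := hnum.div (continuous_ofReal.tendsto 1 |>.comp hden) one_ne_zero
  rw [ofReal_one, div_one] at hquot
  exact hquot

theorem heteroclinic_orbit_asymptotics_general
    (N : ℕ) (hN : 3 ≤ N) (a ω γ p : ℝ)
    (h β ρ μ φ : ℝ)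
    (hh : h = 1 / N) (hβ : β = Real.pi / N)
    (hcond : ρ * Real.cos β ^ 2 > 1)
    (hμ : μ = 2 / h ^ 2 * Real.sqrt ρ * Real.sin β * Real.sqrt (ρ * Real.cos β ^ 2 - 1)) :
    let qc : ℝ → ℂ := fun t =>
      (a : ℂ) * Complex.exp (-Complex.I * (2 * ((a : ℂ) ^ 2 - (ω : ℂ) ^ 2) * t - γ))
    let Γ : ℝ → ℂ := fun t =>
      1 - (Real.cos (2 * φ) : ℂ) -
        Complex.I * (Real.sin (2 * φ) : ℂ) * (Real.tanh (2 * μ * t + 2 * p) : ℂ)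
    let Λ : ℤ → ℝ → ℝ := fun n t =>
      1 + (Real.cos φ / Real.cos β) * (1 / Real.cosh (2 * μ * t + 2 * p)) *
        Real.cos (2 * n * β)
    let Q : ℤ → ℝ → ℂ := fun n t => qc t * (Γ t / (Λ n t : ℂ) - 1)
    0 < μ ∧
    ∀ n : ℤ,
      Filter.Tendsto
        (fun t => Q n t - Complex.exp (Complex.I * (Real.pi + 2 * φ)) * qc t)
        Filter.atTop (nhds 0) ∧
      Filter.Tendsto
        (fun t => Q n t - Complex.exp (Complex.I * (Real.pi - 2 * φ)) * qc t)
        Filter.atBot (nhds 0) := by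
  intro qc Γ Λ Q
  have hN1 : (1 : ℝ) < N := by exact_mod_cast (by omega : 1 < N)
  have hμ0 : 0 < μ := hμ ▸ darboux_rate_pos (by rw [hh]; positivity)
    (hβ ▸ Real.sin_pi_div_pos hN1) hcond
  have hx_top : Tendsto (fun t : ℝ => 2 * μ * t + 2 * p) atTop atTop :=
    tendsto_atTop_add_const_right _ _ (tendsto_id.const_mul_atTop (by positivity))
  have hx_bot : Tendsto (fun t : ℝ => 2 * μ * t + 2 * p) atBot atBot :=
    tendsto_atBot_add_const_right _ _ (tendsto_id.const_mul_atBot (by positivity))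
  have hqc (t : ℝ) : ‖qc t‖ ≤ |a| := (norm_uniform_solution a ω γ t).le
  refine ⟨hμ0, fun n => ⟨?_, ?_⟩⟩
  · refine Tendsto.mul_sub_mul_of_norm_le ?_ hqc
    convert (tendsto_sub_mul_tanh_div_one_add_mul_sech _ _ _ _
      (Real.tendsto_tanh_atTop.comp hx_top) (Real.tendsto_cosh_atTop.comp hx_top)).sub_const 1
    rw [Complex.exp_I_mul_pi_add]
    push_cast
    ring
  · refine Tendsto.mul_sub_mul_of_norm_le ?_ hqc
    convert (tendsto_sub_mul_tanh_div_one_add_mul_sech _ _ _ _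
      (Real.tendsto_tanh_atBot.comp hx_bot) (Real.tendsto_cosh_atBot.comp hx_bot)).sub_const 1
    rw [sub_eq_add_neg, Complex.exp_I_mul_pi_add, Complex.cos_neg, Complex.sin_neg]
    push_cast
    ring

/-- The heteroclinic orbit `Q_n(t) = q_c(t)(Γ(t)/Λ_n(t) - 1)` produced
by the Bäcklund–Darboux transformation is homoclinic to the uniform solution `q_c`:
`Q_n(t) - e^{i(π+2φ)} q_c(t) → 0` as `t → +∞` and
`Q_n(t) - e^{i(π-2φ)} q_c(t) → 0` as `t → -∞`. -/
theorem heteroclinic_orbit_asymptotics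
    (N : ℕ) (hN : 3 ≤ N) (a ω γ p : ℝ)
    (h β ρ μ φ : ℝ)
    (hh : h = 1 / N) (hβ : β = Real.pi / N)
    (ha : a > N * Real.tan (Real.pi / N))
    (hρ : ρ = 1 + h ^ 2 * a ^ 2)
    (hcond : ρ * Real.cos β ^ 2 > 1)
    (hφmem : φ ∈ Set.Ioo 0 (Real.pi / 2))
    (hφ : Real.sin φ = Real.sqrt ρ * Real.sin β / (h * a))
    (hμ : μ = 2 / h ^ 2 * Real.sqrt ρ * Real.sin β * Real.sqrt (ρ * Real.cos β ^ 2 - 1)) :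
    let qc : ℝ → ℂ := fun t =>
      (a : ℂ) * Complex.exp (-Complex.I * (2 * ((a : ℂ) ^ 2 - (ω : ℂ) ^ 2) * t - γ))
    let Γ : ℝ → ℂ := fun t =>
      1 - (Real.cos (2 * φ) : ℂ) -
        Complex.I * (Real.sin (2 * φ) : ℂ) * (Real.tanh (2 * μ * t + 2 * p) : ℂ)
    let Λ : ℤ → ℝ → ℝ := fun n t =>
      1 + (Real.cos φ / Real.cos β) * (1 / Real.cosh (2 * μ * t + 2 * p)) *
        Real.cos (2 * n * β)
    let Q : ℤ → ℝ → ℂ := fun n t => qc t * (Γ t / (Λ n t : ℂ) - 1)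
    0 < μ ∧
    ∀ n : ℤ,
      Filter.Tendsto
        (fun t => Q n t - Complex.exp (Complex.I * (Real.pi + 2 * φ)) * qc t)
        Filter.atTop (nhds 0) ∧
      Filter.Tendsto
        (fun t => Q n t - Complex.exp (Complex.I * (Real.pi - 2 * φ)) * qc t)
        Filter.atBot (nhds 0) :=
  heteroclinic_orbit_asymptotics_general N hN a ω γ p h β ρ μ φ hh hβ hcond hμ
end
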